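/- Let K ∈ ℕ, h_0,…,h_K ∈ ℝ be filter coefficients with generalized frequency response h : ℝ^K → ℝ, and let C_L > 0. If λ₁, λ₂ ∈ ℝ^K satisfy ‖∇_L h(λ₁, λ₂)‖₂ ≤ C_L, then |h(λ₁) − h(λ₂)| ≤ C_L ‖λ₁ − λ₂‖₂. -/

import Mathlib

open scoped RealInnerProductSpace

/-- The generalized frequency response `h(λ) = ∑_{k=0}^K h_k ∏_{κ=1}^k λ_κ`
of a graph filter with coefficients `h_0, …, h_K` (the empty product, for `k = 0`, is `1`). -/
noncomputable def genFreqResp (K : ℕ) (h : ℕ → ℝ) (lam : EuclideanSpace ℝ (Fin K)) : ℝ :=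
  ∑ k ∈ Finset.range (K + 1), h k * ∏ κ : Fin K, (if (κ : ℕ) < k then lam κ else 1)

/-- The vector `λ^{(k)}` whose first `k` entries (here: indices `κ ≤ k` in 0-indexed terms,
i.e. the first `k+1 ∈ {1,…,K}` entries for `k : Fin K`) come from `lam1` and whose remaining
entries come from `lam2`. -/
noncomputable def lipMix (K : ℕ) (lam1 lam2 : EuclideanSpace ℝ (Fin K)) (k : Fin K) :
    EuclideanSpace ℝ (Fin K) :=
  (WithLp.equiv 2 (Fin K → ℝ)).symm fun κ => if (κ : ℕ) ≤ (k : ℕ) then lam1 κ else lam2 κ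

/-- The Lipschitz gradient `∇_L h(λ₁, λ₂)`: its `k`-th entry is the partial derivative of the
generalized frequency response with respect to its `k`-th argument, evaluated at `λ^{(k)}`. -/
noncomputable def lipGrad (K : ℕ) (h : ℕ → ℝ) (lam1 lam2 : EuclideanSpace ℝ (Fin K)) :
    EuclideanSpace ℝ (Fin K) :=
  (WithLp.equiv 2 (Fin K → ℝ)).symm fun k =>
    deriv (fun t : ℝ => genFreqResp K h (WithLp.toLp 2 (Function.update (lipMix K lam1 lam2 k) k t))) (lam1 k)

/-- Slope coefficient of `genFreqResp` in the `k`-th coordinate. -/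
noncomputable def gSlope (K : ℕ) (h : ℕ → ℝ) (x : EuclideanSpace ℝ (Fin K)) (k : Fin K) : ℝ :=
  ∑ k' ∈ Finset.range (K + 1),
    if (k : ℕ) < k' then h k' * ∏ κ ∈ Finset.univ.erase k, (if (κ : ℕ) < k' then x κ else 1)
    else 0

lemma genFreqResp_update (K : ℕ) (h : ℕ → ℝ) (x : EuclideanSpace ℝ (Fin K)) (k : Fin K)
    (t : ℝ) :
    genFreqResp K h (WithLp.toLp 2 (Function.update x k t)) =
      gSlope K h x k * t +
        ∑ k' ∈ Finset.range (K + 1),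
          if (k : ℕ) < k' then 0
          else h k' * ∏ κ ∈ Finset.univ.erase k, (if (κ : ℕ) < k' then x κ else 1) := by
  unfold genFreqResp gSlope
  simp only [WithLp.ofLp_toLp]
  rw [Finset.sum_mul, ← Finset.sum_add_distrib]
  refine Finset.sum_congr rfl fun k' _ => ?_
  rw [← Finset.mul_prod_erase _ _ (Finset.mem_univ k)]
  have hupd : ∀ κ ∈ Finset.univ.erase k,
      (if (κ : ℕ) < k' then Function.update x k t κ else 1)
        = (if (κ : ℕ) < k' then x κ else 1) := by
    intro κ hκ
    rw [Function.update_of_ne (Finset.ne_of_mem_erase hκ)]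
  rw [Finset.prod_congr rfl hupd, Function.update_self]
  split_ifs with hk
  · ring
  · ring

lemma genFreqResp_update_sub (K : ℕ) (h : ℕ → ℝ) (x : EuclideanSpace ℝ (Fin K)) (k : Fin K)
    (s t : ℝ) :
    genFreqResp K h (WithLp.toLp 2 (Function.update x k s)) - genFreqResp K h (WithLp.toLp 2 (Function.update x k t))
      = gSlope K h x k * (s - t) := by
  rw [genFreqResp_update, genFreqResp_update]; ring

lemma deriv_genFreqResp_update (K : ℕ) (h : ℕ → ℝ) (x : EuclideanSpace ℝ (Fin K)) (k : Fin K)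
    (t₀ : ℝ) :
    deriv (fun t : ℝ => genFreqResp K h (WithLp.toLp 2 (Function.update x k t))) t₀ = gSlope K h x k := by
  have hfun : (fun t : ℝ => genFreqResp K h (WithLp.toLp 2 (Function.update x k t)))
      = fun t : ℝ => gSlope K h x k * t +
        ∑ k' ∈ Finset.range (K + 1),
          if (k : ℕ) < k' then 0
          else h k' * ∏ κ ∈ Finset.univ.erase k, (if (κ : ℕ) < k' then x κ else 1) :=
    funext fun t => genFreqResp_update K h x k t
  rw [hfun]
  have := (((hasDerivAt_id t₀).const_mul (gSlope K h x k)).add_const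
    (∑ k' ∈ Finset.range (K + 1),
      if (k : ℕ) < k' then 0
      else h k' * ∏ κ ∈ Finset.univ.erase k, (if (κ : ℕ) < k' then x κ else 1))).deriv
  simpa using this

/-- if `‖∇_L h(λ₁, λ₂)‖₂ ≤ C_L` then `|h(λ₁) − h(λ₂)| ≤ C_L ‖λ₁ − λ₂‖₂`. -/
theorem abs_genFreqResp_sub_le_of_lipGrad_norm_le (K : ℕ) (h : ℕ → ℝ) (CL : ℝ) (hCL : 0 < CL)
    (lam1 lam2 : EuclideanSpace ℝ (Fin K))
    (hgrad : ‖lipGrad K h lam1 lam2‖ ≤ CL) :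
    |genFreqResp K h lam1 - genFreqResp K h lam2| ≤ CL * ‖lam1 - lam2‖ := by
  set m : ℕ → EuclideanSpace ℝ (Fin K) := fun j =>
    (WithLp.equiv 2 (Fin K → ℝ)).symm fun κ => if (κ : ℕ) < j then lam1 κ else lam2 κ with hm
  have hm0 : m 0 = lam2 := by
    ext κ; simp [hm]
  have hmK : m K = lam1 := by
    ext κ; simp [hm, κ.isLt]
  have key : genFreqResp K h lam1 - genFreqResp K h lam2
      = ∑ k : Fin K, lipGrad K h lam1 lam2 k * (lam1 k - lam2 k) := by
    conv_lhs => rw [← hmK, ← hm0]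
    rw [← Finset.sum_range_sub (fun j => genFreqResp K h (m j)),
      ← Fin.sum_univ_eq_sum_range
        (fun j => genFreqResp K h (m (j + 1)) - genFreqResp K h (m j))]
    refine Finset.sum_congr rfl fun k _ => ?_
    have h1 : m ((k : ℕ) + 1) = WithLp.toLp 2 (Function.update (lipMix K lam1 lam2 k) k (lam1 k)) := by
      ext κ
      by_cases hk : κ = k
      · subst hk; simp [hm, lipMix]
      · simp [hm, lipMix, Function.update_of_ne hk, Nat.lt_succ_iff]
    have h2 : m (k : ℕ) = WithLp.toLp 2 (Function.update (lipMix K lam1 lam2 k) k (lam2 k)) := by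
      ext κ
      by_cases hk : κ = k
      · subst hk; simp [hm]
      · have hlt : κ ≤ k ↔ κ < k := by
          rw [Fin.le_def, Fin.lt_def]
          exact ⟨fun hle => lt_of_le_of_ne hle fun he => hk (Fin.ext he), le_of_lt⟩
        simp [hm, lipMix, Function.update_of_ne hk, hlt]
    rw [h1, h2, genFreqResp_update_sub]
    have hlg : lipGrad K h lam1 lam2 k
        = gSlope K h (lipMix K lam1 lam2 k) k := by
      show deriv (fun t : ℝ => genFreqResp K h
        (WithLp.toLp 2 (Function.update (lipMix K lam1 lam2 k) k t))) (lam1 k) = _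
      exact deriv_genFreqResp_update K h _ k _
    rw [hlg]
  have hinner : genFreqResp K h lam1 - genFreqResp K h lam2
      = ⟪lipGrad K h lam1 lam2, lam1 - lam2⟫ := by
    rw [key, PiLp.inner_apply]
    refine Finset.sum_congr rfl fun k _ => ?_
    simp [RCLike.inner_apply, mul_comm]
  rw [hinner]
  calc |⟪lipGrad K h lam1 lam2, lam1 - lam2⟫|
      ≤ ‖lipGrad K h lam1 lam2‖ * ‖lam1 - lam2‖ := abs_real_inner_le_norm _ _
    _ ≤ CL * ‖lam1 - lam2‖ := mul_le_mul_of_nonneg_right hgrad (norm_nonneg _)
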